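/- arXiv:2310.00370 — 3 statements merged into one kernel-verified Lean document; each statement's English description precedes it below -/
import Mathlib

section
/- Let 0 ≤ γ < 1 and θ > 0, and let w be a weight on ℝ^{n+1}. Assume there exist 0 < α < 1 and 0 < β < 1 such that for every parabolic rectangle R and every measurable set E ⊂ R^−(γ) with |E| < α |R^−(γ)| one has w(E) < β w(R^+(γ)). Then there exists a constant C ≥ 1, depending only on p, γ, α, β and θ, such that w(R^−(γ)) ≤ C w(R^−(γ) + (0, ηL^p)) for every parabolic rectangle R of side length L and every 0 ≤ η ≤ θ, where R^−(γ) + (0, ηL^p) denotes the time translate of R^−(γ) by ηL^p. -/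
open MeasureTheory Set

noncomputable section

/-- The spatial cube `Q(x,L)` with center `x` and side length `L`. -/
def parQ (n : ℕ) (x : Fin n → ℝ) (L : ℝ) : Set (Fin n → ℝ) :=
  {y | ∀ i, |y i - x i| ≤ L / 2}

/-- Lower part `R^-(γ)` of the parabolic rectangle `R(x,t,L)`. -/
def pMinus (n : ℕ) (p γ : ℝ) (x : Fin n → ℝ) (t L : ℝ) : Set ((Fin n → ℝ) × ℝ) :=
  (parQ n x L) ×ˢ Set.Ioo (t - L ^ p) (t - γ * L ^ p)

/-- Upper part `R^+(γ)` of the parabolic rectangle `R(x,t,L)`. -/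
def pPlus (n : ℕ) (p γ : ℝ) (x : Fin n → ℝ) (t L : ℝ) : Set ((Fin n → ℝ) × ℝ) :=
  (parQ n x L) ×ˢ Set.Ioo (t + γ * L ^ p) (t + L ^ p)

/-- The full parabolic rectangle `R(x,t,L)`. -/
def pRect (n : ℕ) (p : ℝ) (x : Fin n → ℝ) (t L : ℝ) : Set ((Fin n → ℝ) × ℝ) :=
  (parQ n x L) ×ˢ Set.Ioo (t - L ^ p) (t + L ^ p)

/-- A weight: a nonnegative locally integrable function on `ℝ^{n+1}`. -/
def IsWeight (n : ℕ) (w : (Fin n → ℝ) × ℝ → ℝ) : Prop :=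
  (∀ z, 0 ≤ w z) ∧ MeasureTheory.LocallyIntegrable w volume

namespace S5

def slab (n : ℕ) (x : Fin n → ℝ) (L a b : ℝ) : Set ((Fin n → ℝ) × ℝ) :=
  (parQ n x L) ×ˢ Set.Ioo a b

variable {n : ℕ}

theorem parQ_eq (x : Fin n → ℝ) (L : ℝ) :
    parQ n x L = Set.pi Set.univ (fun i => Icc (x i - L / 2) (x i + L / 2)) := by
  ext y
  simp only [parQ, mem_setOf_eq, Set.mem_pi, Set.mem_univ, forall_true_left, mem_Icc]
  refine forall_congr' fun i => ?_
  rw [abs_le]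
  constructor <;> intro h <;> constructor <;> linarith [h.1, h.2]

theorem measurableSet_parQ (x : Fin n → ℝ) (L : ℝ) : MeasurableSet (parQ n x L) := by
  rw [parQ_eq]; exact MeasurableSet.univ_pi fun i => measurableSet_Icc

theorem isCompact_parQ (x : Fin n → ℝ) (L : ℝ) : IsCompact (parQ n x L) := by
  rw [parQ_eq]; exact isCompact_univ_pi fun i => isCompact_Icc

theorem volume_parQ (x : Fin n → ℝ) {L : ℝ} (hL : 0 ≤ L) :
    volume (parQ n x L) = ENNReal.ofReal (L ^ n) := by
  rw [parQ_eq, volume_pi_pi, ENNReal.ofReal_pow hL]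
  have : ∀ i : Fin n, volume (Icc (x i - L / 2) (x i + L / 2)) = ENNReal.ofReal L := by
    intro i; rw [Real.volume_Icc]; ring_nf
  simp [this, Finset.prod_const]

theorem measurableSet_slab (x : Fin n → ℝ) (L a b : ℝ) : MeasurableSet (slab n x L a b) :=
  (measurableSet_parQ x L).prod measurableSet_Ioo

theorem integrableOn_slab {w : (Fin n → ℝ) × ℝ → ℝ} (hw : LocallyIntegrable w volume)
    (x : Fin n → ℝ) (L a b : ℝ) : IntegrableOn w (slab n x L a b) := by
  have hK : IsCompact ((parQ n x L) ×ˢ Icc a b) := (isCompact_parQ x L).prod isCompact_Icc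
  exact (hw.integrableOn_isCompact hK).mono_set (prod_mono_right Ioo_subset_Icc_self)

theorem volume_slab (x : Fin n → ℝ) {L : ℝ} (hL : 0 ≤ L) (a b : ℝ) :
    volume (slab n x L a b) = ENNReal.ofReal (L ^ n) * ENNReal.ofReal (b - a) := by
  rw [slab, Measure.volume_eq_prod, Measure.prod_prod, volume_parQ x hL, Real.volume_Ioo]

theorem integral_le_sum_cover {ι : Type*} (s : Finset ι) {w : (Fin n → ℝ) × ℝ → ℝ}
    (hw0 : ∀ z, 0 ≤ w z) (A : ι → Set ((Fin n → ℝ) × ℝ)) (B : Set ((Fin n → ℝ) × ℝ))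
    (hB : MeasurableSet B) (hBA : B ⊆ ⋃ i ∈ s, A i)
    (hAmeas : ∀ i ∈ s, MeasurableSet (A i))
    (hIntB : IntegrableOn w B) (hIntA : ∀ i ∈ s, IntegrableOn w (A i)) :
    ∫ z in B, w z ≤ ∑ i ∈ s, ∫ z in A i, w z := by
  set ν := volume.withDensity (fun z => ENNReal.ofReal (w z)) with hν
  have key : ∀ E : Set ((Fin n → ℝ) × ℝ), MeasurableSet E → IntegrableOn w E →
      ENNReal.ofReal (∫ z in E, w z) = ν E := by
    intro E hE hI
    rw [hν, withDensity_apply _ hE,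
      ofReal_integral_eq_lintegral_ofReal hI (ae_of_all _ hw0)]
  have h1 : ENNReal.ofReal (∫ z in B, w z) ≤ ∑ i ∈ s, ENNReal.ofReal (∫ z in A i, w z) := by
    rw [key B hB hIntB]
    calc ν B ≤ ν (⋃ i ∈ s, A i) := measure_mono hBA
      _ ≤ ∑ i ∈ s, ν (A i) := measure_biUnion_finset_le s A
      _ = ∑ i ∈ s, ENNReal.ofReal (∫ z in A i, w z) :=
        Finset.sum_congr rfl fun i hi => (key _ (hAmeas i hi) (hIntA i hi)).symm
  have hnn : ∀ i ∈ s, 0 ≤ ∫ z in A i, w z := fun i hi =>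
    setIntegral_nonneg (hAmeas i hi) fun z _ => hw0 z
  rw [← ENNReal.ofReal_sum_of_nonneg hnn] at h1
  exact (ENNReal.ofReal_le_ofReal_iff (Finset.sum_nonneg hnn)).mp h1


/-- 1D spatial covering: every point of `[0,L]` lies in some interval
`[min(kℓ, L-ℓ), min(kℓ, L-ℓ)+ℓ]` with `k < mS`. -/
theorem space_cover {ℓ L u : ℝ} (hl : 0 < ℓ) (hL : ℓ ≤ L) {mS : ℕ} (hmS : L ≤ mS * ℓ)
    (hu0 : 0 ≤ u) (huL : u ≤ L) :
    ∃ k : ℕ, k < mS ∧ min ((k : ℝ) * ℓ) (L - ℓ) ≤ u ∧ u ≤ min ((k : ℝ) * ℓ) (L - ℓ) + ℓ := by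
  have hmS1 : 1 ≤ mS := by
    by_contra hc
    push_neg at hc
    interval_cases mS
    simp at hmS
    linarith
  refine ⟨min ⌊u / ℓ⌋₊ (mS - 1), ?_, ?_, ?_⟩
  · exact lt_of_le_of_lt (min_le_right _ _) (Nat.sub_lt hmS1 one_pos)
  · refine le_trans (min_le_left _ _) ?_
    have h1 : ((min ⌊u / ℓ⌋₊ (mS - 1) : ℕ) : ℝ) ≤ (⌊u / ℓ⌋₊ : ℝ) := by
      exact_mod_cast Nat.cast_le.mpr (min_le_left _ _)
    have h2 : (⌊u / ℓ⌋₊ : ℝ) ≤ u / ℓ := Nat.floor_le (by positivity)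
    calc ((min ⌊u / ℓ⌋₊ (mS - 1) : ℕ) : ℝ) * ℓ ≤ (u / ℓ) * ℓ := by
          apply mul_le_mul_of_nonneg_right (le_trans h1 h2) hl.le
      _ = u := by field_simp
  · rw [← sub_le_iff_le_add]
    refine le_min ?_ (by linarith)
    rcases le_total ⌊u / ℓ⌋₊ (mS - 1) with hc | hc
    · rw [min_eq_left hc]
      have h2 : u / ℓ < (⌊u / ℓ⌋₊ : ℝ) + 1 := Nat.lt_floor_add_one _
      have : u < ((⌊u / ℓ⌋₊ : ℝ) + 1) * ℓ := by
        calc u = (u / ℓ) * ℓ := by field_simp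
          _ < ((⌊u / ℓ⌋₊ : ℝ) + 1) * ℓ := by apply mul_lt_mul_of_pos_right h2 hl
      nlinarith
    · rw [min_eq_right hc]
      have : ((mS - 1 : ℕ) : ℝ) = (mS : ℝ) - 1 := by
        rw [Nat.cast_sub hmS1]; norm_num
      rw [this]
      nlinarith

/-- 1D time covering: every point of `(0,δ)` lies in some `(st j, st j + δ')`
with `st j = min (j·δ'/2) (δ-δ')` and `j ≤ ⌈(δ-δ')/(δ'/2)⌉₊`. -/
theorem time_cover {δ δ' r : ℝ} (hδ' : 0 < δ') (hδ : δ' ≤ δ)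
    (hr0 : 0 < r) (hr : r < δ) :
    ∃ j : ℕ, (j : ℝ) ≤ (δ - δ') / (δ' / 2) + 1 ∧
      min ((j : ℝ) * (δ' / 2)) (δ - δ') < r ∧ r < min ((j : ℝ) * (δ' / 2)) (δ - δ') + δ' := by
  set h := δ' / 2 with hh
  have hhpos : 0 < h := by positivity
  by_cases hc : r < δ'
  · refine ⟨0, ?_, ?_, ?_⟩
    · push_cast
      have : 0 ≤ (δ - δ') / h := div_nonneg (by linarith) hhpos.le
      linarith
    · simpa [min_eq_left (by linarith : (0:ℝ) ≤ δ - δ')] using hr0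
    · rw [Nat.cast_zero, zero_mul, min_eq_left (by linarith : (0:ℝ) ≤ δ - δ')]
      linarith
  · push_neg at hc
    set j := ⌊(r - δ') / h⌋₊ + 1 with hj
    have hfl : ((⌊(r - δ') / h⌋₊ : ℕ) : ℝ) ≤ (r - δ') / h := Nat.floor_le (div_nonneg (by linarith) hhpos.le)
    have hfl2 : (r - δ') / h < (⌊(r - δ') / h⌋₊ : ℝ) + 1 := Nat.lt_floor_add_one _
    have hjr : (j : ℝ) * h < r := by
      have : (j : ℝ) = (⌊(r - δ') / h⌋₊ : ℝ) + 1 := by push_cast [hj]; ring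
      rw [this]
      have h1 : ((⌊(r - δ') / h⌋₊ : ℝ) + 1) * h ≤ ((r - δ') / h) * h + h := by nlinarith
      have h2 : ((r - δ') / h) * h = r - δ' := by field_simp
      rw [h2] at h1
      rw [hh] at h1 ⊢
      linarith
    have hjr2 : r - δ' < (j : ℝ) * h := by
      have : (j : ℝ) = (⌊(r - δ') / h⌋₊ : ℝ) + 1 := by push_cast [hj]; ring
      rw [this]
      calc r - δ' = ((r - δ') / h) * h := by field_simp
        _ < ((⌊(r - δ') / h⌋₊ : ℝ) + 1) * h := by apply mul_lt_mul_of_pos_right hfl2 hhpos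
    refine ⟨j, ?_, ?_, ?_⟩
    · have h2 : (r - δ') / h ≤ (δ - δ') / h := by gcongr <;> linarith
      push_cast [hj]
      linarith
    · exact lt_of_le_of_lt (min_le_left _ _) hjr
    · have h1 : r - δ' < min ((j : ℝ) * h) (δ - δ') := lt_min hjr2 (by linarith)
      linarith


end S5

-- appended to base
namespace S5

variable {n : ℕ}

theorem slab_congr (x : Fin n → ℝ) (L : ℝ) {a b a' b' : ℝ} (h1 : a = a') (h2 : b = b') :
    (parQ n x L) ×ˢ Set.Ioo a b = slab n x L a' b' := by rw [slab, h1, h2]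

/-- The basic forward-in-time step. -/
theorem step {p γ : ℝ} (hγ0 : 0 ≤ γ) (hγ1 : γ < 1)
    {w : (Fin n → ℝ) × ℝ → ℝ} (hw0 : ∀ z, 0 ≤ w z) (hw : LocallyIntegrable w volume)
    {α β : ℝ} (hα0 : 0 < α) (hβ0 : 0 < β)
    (H : ∀ (x : Fin n → ℝ) (t L : ℝ), 0 < L →
      ∀ E ⊆ pMinus n p γ x t L, MeasurableSet E →
        (volume E).toReal < α * (volume (pMinus n p γ x t L)).toReal →
        (∫ z in E, w z) < β * ∫ z in pPlus n p γ x t L, w z)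
    (x : Fin n → ℝ) (ℓ c : ℝ) (hl : 0 < ℓ) :
    ∫ z in slab n x ℓ c (c + (1 - γ) * ℓ ^ p), w z ≤
      (((⌊1 /α⌋₊ + 1 : ℕ) : ℝ) * β) *
        ∫ z in slab n x ℓ (c + (1 + γ) * ℓ ^ p) (c + (1 + γ) * ℓ ^ p + (1 - γ) * ℓ ^ p), w z := by
  set N : ℕ := ⌊1 / α⌋₊ + 1 with hN
  have hlp : (0:ℝ) < ℓ ^ p := Real.rpow_pos_of_pos hl p
  set δ' : ℝ := (1 - γ) * ℓ ^ p with hδ'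
  have hδ'pos : 0 < δ' := by rw [hδ']; exact mul_pos (by linarith) hlp
  have hNpos : 0 < (N : ℝ) := by positivity
  set h : ℝ := δ' / N with hh
  have hhpos : 0 < h := by positivity
  -- identify pMinus and pPlus with slabs
  have hpm : pMinus n p γ x (c + ℓ ^ p) ℓ = slab n x ℓ c (c + δ') := by
    rw [pMinus]
    exact slab_congr x ℓ (by ring) (by rw [hδ']; ring)
  have hpp : pPlus n p γ x (c + ℓ ^ p) ℓ =
      slab n x ℓ (c + (1 + γ) * ℓ ^ p) (c + (1 + γ) * ℓ ^ p + (1 - γ) * ℓ ^ p) := by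
    rw [pPlus]
    exact slab_congr x ℓ (by ring) (by ring)
  -- the pieces
  set A : ℕ → Set ((Fin n → ℝ) × ℝ) := fun j =>
    (parQ n x ℓ) ×ˢ (Ioc (c + j * h) (c + (j + 1) * h) ∩ Ioo c (c + δ')) with hA
  have hAmeas : ∀ j, MeasurableSet (A j) := fun j =>
    (measurableSet_parQ x ℓ).prod (measurableSet_Ioc.inter measurableSet_Ioo)
  have hAsub : ∀ j, A j ⊆ slab n x ℓ c (c + δ') := fun j =>
    prod_mono_right (inter_subset_right)
  have hIntSlab : ∀ a b : ℝ, IntegrableOn w (slab n x ℓ a b) := fun a b =>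
    integrableOn_slab hw x ℓ a b
  have hIntA : ∀ j, IntegrableOn w (A j) := fun j => (hIntSlab c (c + δ')).mono_set (hAsub j)
  -- covering
  have hcov : slab n x ℓ c (c + δ') ⊆ ⋃ j ∈ Finset.range N, A j := by
    rintro ⟨y, u⟩ ⟨hy, hu⟩
    have hu1 : c < u := hu.1
    have hu2 : u < c + δ' := hu.2
    set r : ℝ := u - c with hr
    have hr0 : 0 < r := by rw [hr]; linarith
    have hrδ : r ≤ δ' := by rw [hr]; linarith
    set j : ℕ := ⌈r / h⌉₊ - 1 with hj
    have hcl : 1 ≤ ⌈r / h⌉₊ := by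
      rw [Nat.one_le_iff_ne_zero, ← Nat.pos_iff_ne_zero]
      rw [Nat.lt_ceil]
      push_cast
      positivity
    have hjsucc : (j : ℕ) + 1 = ⌈r / h⌉₊ := by omega
    have hjub : (j : ℝ) < r / h := by
      have := Nat.lt_ceil.mp (show j < ⌈r / h⌉₊ by omega)
      exact this
    have hjlb : r / h ≤ (j : ℝ) + 1 := by
      have := Nat.le_ceil (r / h)
      rw [← hjsucc] at this
      push_cast at this
      linarith
    have hNh : (N : ℝ) * h = δ' := by rw [hh]; field_simp
    have hjN : j < N := by
      have hceil : ⌈r / h⌉₊ ≤ N := by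
        rw [Nat.ceil_le, div_le_iff₀ hhpos]
        linarith
      omega
    refine mem_biUnion (Finset.mem_range.mpr hjN) ⟨hy, ⟨?_, ?_⟩, hu⟩
    · have hlt : (j : ℝ) * h < r := by
        have h2 := mul_lt_mul_of_pos_right hjub hhpos
        rwa [div_mul_cancel₀ r hhpos.ne'] at h2
      rw [hr] at hlt; linarith
    · have hle : r ≤ ((j : ℝ) + 1) * h := by
        have h2 := mul_le_mul_of_nonneg_right hjlb hhpos.le
        rwa [div_mul_cancel₀ r hhpos.ne'] at h2
      rw [hr] at hle; linarith
  -- each piece is small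
  have hsmall : ∀ j, (volume (A j)).toReal < α * (volume (pMinus n p γ x (c + ℓ ^ p) ℓ)).toReal := by
    intro j
    have hub : volume (A j) ≤ ENNReal.ofReal (ℓ ^ n) * ENNReal.ofReal h := by
      have : A j ⊆ (parQ n x ℓ) ×ˢ Ioc (c + j * h) (c + (j + 1) * h) :=
        prod_mono_right inter_subset_left
      refine le_trans (measure_mono this) ?_
      rw [Measure.volume_eq_prod, Measure.prod_prod, volume_parQ x hl.le, Real.volume_Ioc]
      apply le_of_eq
      congr 1
      congr 1
      ring
    have hfin : ENNReal.ofReal (ℓ ^ n) * ENNReal.ofReal h ≠ ⊤ := by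
      exact ENNReal.mul_ne_top ENNReal.ofReal_ne_top ENNReal.ofReal_ne_top
    have h1 : (volume (A j)).toReal ≤ ℓ ^ n * h := by
      refine le_trans (ENNReal.toReal_mono hfin hub) ?_
      rw [← ENNReal.ofReal_mul (by positivity)]
      rw [ENNReal.toReal_ofReal (mul_nonneg (by positivity) hhpos.le)]
    have h2 : (volume (pMinus n p γ x (c + ℓ ^ p) ℓ)).toReal = ℓ ^ n * δ' := by
      have e : c + δ' - c = δ' := by ring
      rw [hpm, volume_slab x hl.le, e, ← ENNReal.ofReal_mul (by positivity),
        ENNReal.toReal_ofReal (mul_nonneg (by positivity) hδ'pos.le)]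
    rw [h2]
    have hNα : 1 / α < (N : ℝ) := by
      rw [hN]
      push_cast
      exact Nat.lt_floor_add_one (1 / α)
    have hhαδ : h < α * δ' := by
      have h1 : 1 < (N : ℝ) * α := by
        rw [← div_lt_iff₀ hα0]; exact hNα
      rw [hh, div_lt_iff₀ hNpos]
      nlinarith
    have hlnpos : (0:ℝ) < ℓ ^ n := by positivity
    calc (volume (A j)).toReal ≤ ℓ ^ n * h := h1
      _ < ℓ ^ n * (α * δ') := by exact mul_lt_mul_of_pos_left hhαδ hlnpos
      _ = α * (ℓ ^ n * δ') := by ring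
  -- apply H to each piece and sum
  have hH : ∀ j, (∫ z in A j, w z) < β * ∫ z in pPlus n p γ x (c + ℓ ^ p) ℓ, w z := by
    intro j
    refine H x (c + ℓ ^ p) ℓ hl (A j) ?_ (hAmeas j) (hsmall j)
    rw [hpm]; exact hAsub j
  have hsum : ∫ z in slab n x ℓ c (c + δ'), w z ≤ ∑ j ∈ Finset.range N, ∫ z in A j, w z :=
    integral_le_sum_cover (Finset.range N) hw0 A _ (measurableSet_slab x ℓ c (c + δ'))
      hcov (fun j _ => hAmeas j) (hIntSlab c (c + δ')) (fun j _ => hIntA j)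
  calc ∫ z in slab n x ℓ c (c + δ'), w z ≤ ∑ j ∈ Finset.range N, ∫ z in A j, w z := hsum
    _ ≤ ∑ j ∈ Finset.range N, β * ∫ z in pPlus n p γ x (c + ℓ ^ p) ℓ, w z :=
      Finset.sum_le_sum fun j _ => (hH j).le
    _ = (N : ℝ) * β * ∫ z in slab n x ℓ (c + (1 + γ) * ℓ ^ p) (c + (1 + γ) * ℓ ^ p + (1 - γ) * ℓ ^ p), w z := by
      rw [Finset.sum_const, Finset.card_range, hpp]
      simp [nsmul_eq_mul]
      ring

end S5

namespace S5

variable {n : ℕ}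

theorem image_shift (x : Fin n → ℝ) (L a b c : ℝ) :
    (fun z : (Fin n → ℝ) × ℝ => (z.1, z.2 + c)) '' slab n x L a b =
      slab n x L (a + c) (b + c) := by
  rw [slab, slab]
  have h1 : parQ n x L = (fun y : Fin n → ℝ => y) '' parQ n x L := by rw [Set.image_id']
  have h2 : Ioo (a + c) (b + c) = (fun u : ℝ => u + c) '' Ioo a b := by
    rw [Set.image_add_const_Ioo]
  conv_rhs => rw [h1, h2, Set.prod_image_image_eq]

theorem iter {p γ : ℝ} (hγ0 : 0 ≤ γ) (hγ1 : γ < 1)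
    {w : (Fin n → ℝ) × ℝ → ℝ} (hw0 : ∀ z, 0 ≤ w z) (hw : LocallyIntegrable w volume)
    {α β : ℝ} (hα0 : 0 < α) (hβ0 : 0 < β)
    (H : ∀ (x : Fin n → ℝ) (t L : ℝ), 0 < L →
      ∀ E ⊆ pMinus n p γ x t L, MeasurableSet E →
        (volume E).toReal < α * (volume (pMinus n p γ x t L)).toReal →
        (∫ z in E, w z) < β * ∫ z in pPlus n p γ x t L, w z)
    (x : Fin n → ℝ) (ℓ : ℝ) (hl : 0 < ℓ) {K : ℝ}
    (hK : ((⌊1 / α⌋₊ + 1 : ℕ) : ℝ) * β ≤ K) (hK1 : 1 ≤ K) :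
    ∀ (m : ℕ) (c : ℝ), ∫ z in slab n x ℓ c (c + (1 - γ) * ℓ ^ p), w z ≤
      K ^ m * ∫ z in slab n x ℓ (c + (m : ℝ) * ((1 + γ) * ℓ ^ p))
        (c + (m : ℝ) * ((1 + γ) * ℓ ^ p) + (1 - γ) * ℓ ^ p), w z := by
  intro m
  induction m with
  | zero => intro c; simp
  | succ m ih =>
    intro c
    have hK0 : (0 : ℝ) ≤ K := by linarith
    have hstep := step hγ0 hγ1 hw0 hw hα0 hβ0 H x ℓ (c + (m : ℝ) * ((1 + γ) * ℓ ^ p)) hl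
    have hnn : 0 ≤ ∫ z in slab n x ℓ (c + (m : ℝ) * ((1 + γ) * ℓ ^ p) + (1 + γ) * ℓ ^ p)
        (c + (m : ℝ) * ((1 + γ) * ℓ ^ p) + (1 + γ) * ℓ ^ p + (1 - γ) * ℓ ^ p), w z :=
      setIntegral_nonneg (measurableSet_slab _ _ _ _) fun z _ => hw0 z
    have e : c + ((m : ℕ) + 1 : ℕ) * ((1 + γ) * ℓ ^ p)
        = c + (m : ℝ) * ((1 + γ) * ℓ ^ p) + (1 + γ) * ℓ ^ p := by push_cast; ring
    calc ∫ z in slab n x ℓ c (c + (1 - γ) * ℓ ^ p), w z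
        ≤ K ^ m * ∫ z in slab n x ℓ (c + (m : ℝ) * ((1 + γ) * ℓ ^ p))
            (c + (m : ℝ) * ((1 + γ) * ℓ ^ p) + (1 - γ) * ℓ ^ p), w z := ih c
      _ ≤ K ^ m * (K * ∫ z in slab n x ℓ (c + (m : ℝ) * ((1 + γ) * ℓ ^ p) + (1 + γ) * ℓ ^ p)
            (c + (m : ℝ) * ((1 + γ) * ℓ ^ p) + (1 + γ) * ℓ ^ p + (1 - γ) * ℓ ^ p), w z) := by
          refine mul_le_mul_of_nonneg_left ?_ (pow_nonneg hK0 m)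
          exact le_trans hstep (mul_le_mul_of_nonneg_right hK hnn)
      _ = K ^ (m + 1) * ∫ z in slab n x ℓ (c + ((m : ℕ) + 1 : ℕ) * ((1 + γ) * ℓ ^ p))
            (c + ((m : ℕ) + 1 : ℕ) * ((1 + γ) * ℓ ^ p) + (1 - γ) * ℓ ^ p), w z := by
          rw [e]; ring

end S5

open S5 in
set_option maxHeartbeats 1000000 in
/-- Forward-in-time doubling of `w(R^-(γ))` under the qualitative measure condition. -/
theorem stmt_5 (n : ℕ) (p γ θ : ℝ) (hp : 1 < p) (hγ0 : 0 ≤ γ) (hγ1 : γ < 1) (hθ : 0 < θ)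
    (w : (Fin n → ℝ) × ℝ → ℝ) (hw : IsWeight n w)
    (α β : ℝ) (hα0 : 0 < α) (hα1 : α < 1) (hβ0 : 0 < β) (hβ1 : β < 1)
    (H : ∀ (x : Fin n → ℝ) (t L : ℝ), 0 < L →
      ∀ E ⊆ pMinus n p γ x t L, MeasurableSet E →
        (volume E).toReal < α * (volume (pMinus n p γ x t L)).toReal →
        (∫ z in E, w z) < β * ∫ z in pPlus n p γ x t L, w z) :
    ∃ C ≥ (1 : ℝ), ∀ (x : Fin n → ℝ) (t L : ℝ), 0 < L → ∀ η : ℝ, 0 ≤ η → η ≤ θ →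
      (∫ z in pMinus n p γ x t L, w z) ≤
        C * ∫ z in (fun z : (Fin n → ℝ) × ℝ => (z.1, z.2 + η * L ^ p)) ''
              pMinus n p γ x t L, w z := by
  obtain ⟨hw0, hwl⟩ := hw
  have hγ1' : (0:ℝ) < 1 - γ := by linarith
  have hγ1'' : (0:ℝ) < 1 + γ := by linarith
  have hp0 : (0:ℝ) < p := by linarith
  set lam : ℝ := ((1 - γ) / 2) ^ (p⁻¹ : ℝ) with hlamdef
  have hlam0 : 0 < lam := Real.rpow_pos_of_pos (by linarith) _
  have hlam1 : lam ≤ 1 := Real.rpow_le_one (by linarith) (by linarith) (by positivity)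
  have hlamp : lam ^ (p : ℝ) = (1 - γ) / 2 := Real.rpow_inv_rpow (by linarith) (ne_of_gt hp0)
  set K : ℝ := max (((⌊1 / α⌋₊ + 1 : ℕ) : ℝ) * β) 1 with hKdef
  have hK1 : (1:ℝ) ≤ K := le_max_right _ _
  have hKβ : ((⌊1 / α⌋₊ + 1 : ℕ) : ℝ) * β ≤ K := le_max_left _ _
  set mS : ℕ := ⌈1 / lam⌉₊ with hmS
  have hmS1 : 1 ≤ mS := Nat.one_le_ceil_iff.mpr (by positivity)
  set mT : ℕ := ⌈2 * (1 + γ) / (1 - γ)⌉₊ + 2 with hmT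
  set M : ℕ := ⌈2 * θ / ((1 + γ) * (1 - γ))⌉₊ with hM
  refine ⟨(mS : ℝ) ^ n * (mT : ℝ) * K ^ M, ?_, ?_⟩
  · have h1 : (1:ℝ) ≤ (mS:ℝ) := by exact_mod_cast hmS1
    have h1n : (1:ℝ) ≤ (mS:ℝ) ^ n := one_le_pow₀ h1
    have h2 : (1:ℝ) ≤ (mT:ℝ) := by
      have : 1 ≤ mT := by omega
      exact_mod_cast this
    have h3 : (1:ℝ) ≤ K ^ M := one_le_pow₀ hK1
    have h4 : (1:ℝ)*1*1 ≤ (mS:ℝ)^n * (mT:ℝ) * K^M := by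
      apply mul_le_mul (mul_le_mul h1n h2 one_pos.le (by positivity)) h3 one_pos.le (by positivity)
    linarith
  intro x t L hL η hη0 hηθ
  have hLp : (0:ℝ) < L ^ p := Real.rpow_pos_of_pos hL p
  set ℓ : ℝ := lam * L with hldef
  have hl : 0 < ℓ := mul_pos hlam0 hL
  have hlL : ℓ ≤ L := by
    rw [hldef]
    nlinarith [mul_nonneg (by linarith : (0:ℝ) ≤ 1 - lam) hL.le]
  have hlp : ℓ ^ p = (1 - γ) / 2 * L ^ p := by
    rw [hldef, Real.mul_rpow hlam0.le hL.le, hlamp]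
  have hlppos : (0:ℝ) < ℓ ^ p := Real.rpow_pos_of_pos hl p
  have hkey : (1 + γ) * ℓ ^ p = (1 - γ) * L ^ p - (1 - γ) * ℓ ^ p := by rw [hlp]; ring
  have hδ'pos : (0:ℝ) < (1 - γ) * ℓ ^ p := mul_pos hγ1' hlppos
  have hσpos : (0:ℝ) < (1 + γ) * ℓ ^ p := mul_pos hγ1'' hlppos
  set a : ℝ := t - L ^ p with hadef
  set s : ℝ := η * L ^ p with hsdef
  have hs0 : 0 ≤ s := by rw [hsdef]; exact mul_nonneg hη0 hLp.le
  have hpm : pMinus n p γ x t L = slab n x L a (a + (1 - γ) * L ^ p) := by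
    rw [pMinus]
    exact slab_congr x L (by rw [hadef]) (by rw [hadef]; ring)
  have himg : (fun z : (Fin n → ℝ) × ℝ => (z.1, z.2 + s)) '' pMinus n p γ x t L
      = slab n x L (a + s) (a + (1 - γ) * L ^ p + s) := by
    rw [hpm]
    exact image_shift x L a (a + (1 - γ) * L ^ p) s
  set q : ℕ → ℝ := fun k => min ((k : ℝ) * ℓ) (L - ℓ) with hq
  set st : ℕ → ℝ := fun j =>
    min ((j : ℝ) * ((1 - γ) * ℓ ^ p / 2)) ((1 - γ) * L ^ p - (1 - γ) * ℓ ^ p) with hstd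
  set cent : (Fin n → Fin mS) → Fin n → ℝ := fun κ i => x i - L / 2 + q (κ i) + ℓ / 2 with hcent
  set A : (Fin n → Fin mS) × Fin mT → Set ((Fin n → ℝ) × ℝ) :=
    fun κj => slab n (cent κj.1) ℓ (a + st κj.2) (a + st κj.2 + (1 - γ) * ℓ ^ p) with hA
  have hq0 : ∀ k : ℕ, 0 ≤ q k := fun k =>
    le_min (mul_nonneg (Nat.cast_nonneg k) hl.le) (by linarith)
  have hqL : ∀ k : ℕ, q k ≤ L - ℓ := fun k => min_le_right _ _
  have hcentsub : ∀ κ, parQ n (cent κ) ℓ ⊆ parQ n x L := by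
    intro κ y hy
    have hy' : ∀ i, |y i - cent κ i| ≤ ℓ / 2 := hy
    intro i
    have h1 := hy' i
    have hce : cent κ i = x i - L / 2 + q (κ i) + ℓ / 2 := rfl
    rw [hce, abs_le] at h1
    rw [abs_le]
    have h2 := hq0 (κ i)
    have h3 := hqL (κ i)
    constructor
    · linarith [h1.1]
    · linarith [h1.2]
  have hst0 : ∀ j : ℕ, 0 ≤ st j := by
    intro j
    have hse : st j = min ((j:ℝ) * ((1 - γ) * ℓ ^ p / 2))
        ((1 - γ) * L ^ p - (1 - γ) * ℓ ^ p) := rfl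
    rw [hse]
    exact le_min (mul_nonneg (Nat.cast_nonneg j) (by linarith)) (by linarith)
  have hmSl : L ≤ (mS : ℝ) * ℓ := by
    have h := Nat.le_ceil (1 / lam)
    rw [← hmS] at h
    rw [div_le_iff₀ hlam0] at h
    rw [hldef]
    nlinarith [mul_nonneg (by linarith : (0:ℝ) ≤ (mS:ℝ) * lam - 1) hL.le]
  -- covering
  have hcov : slab n x L a (a + (1 - γ) * L ^ p) ⊆
      ⋃ i ∈ (Finset.univ : Finset ((Fin n → Fin mS) × Fin mT)), A i := by
    rintro ⟨y, u⟩ ⟨hy, hu⟩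
    have hy' : ∀ i, |y i - x i| ≤ L / 2 := hy
    have hsc : ∀ i : Fin n, ∃ k : ℕ, k < mS ∧
        min ((k : ℝ) * ℓ) (L - ℓ) ≤ y i - (x i - L / 2) ∧
        y i - (x i - L / 2) ≤ min ((k : ℝ) * ℓ) (L - ℓ) + ℓ := by
      intro i
      have h1 := hy' i
      rw [abs_le] at h1
      exact space_cover hl hlL hmSl (by linarith [h1.1]) (by linarith [h1.2])
    choose k hk1 hk2 hk3 using hsc
    have hr0 : (0:ℝ) < u - a := by have := hu.1; linarith
    have hr1 : u - a < (1 - γ) * L ^ p := by have := hu.2; linarith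
    have hδ'δ : (1 - γ) * ℓ ^ p ≤ (1 - γ) * L ^ p := by linarith
    obtain ⟨j, hj1, hj2, hj3⟩ := time_cover hδ'pos hδ'δ hr0 hr1
    have hratio : ((1 - γ) * L ^ p - (1 - γ) * ℓ ^ p) / ((1 - γ) * ℓ ^ p / 2)
        = 2 * (1 + γ) / (1 - γ) := by
      rw [← hkey, hlp]
      field_simp
    have hjmT : j < mT := by
      rw [hratio] at hj1
      have h2 : (j:ℝ) ≤ (⌈2 * (1 + γ) / (1 - γ)⌉₊ : ℝ) + 1 :=
        le_trans hj1 (by linarith [Nat.le_ceil (2 * (1 + γ) / (1 - γ))])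
      have h3 : j ≤ ⌈2 * (1 + γ) / (1 - γ)⌉₊ + 1 := by exact_mod_cast h2
      omega
    refine mem_biUnion
      (Finset.mem_univ ((fun i => ⟨k i, hk1 i⟩, ⟨j, hjmT⟩) : (Fin n → Fin mS) × Fin mT)) ?_
    refine ⟨?_, ?_, ?_⟩
    · show ∀ i, |y i - cent (fun i' => ⟨k i', hk1 i'⟩) i| ≤ ℓ / 2
      intro i
      have hce : cent (fun i' => ⟨k i', hk1 i'⟩) i
          = x i - L / 2 + min (((k i : ℕ) : ℝ) * ℓ) (L - ℓ) + ℓ / 2 := rfl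
      rw [hce, abs_le]
      constructor
      · linarith [hk2 i]
      · linarith [hk3 i]
    · show a + st j < u
      have hse : st j = min ((j:ℝ) * ((1 - γ) * ℓ ^ p / 2))
          ((1 - γ) * L ^ p - (1 - γ) * ℓ ^ p) := rfl
      rw [hse]; linarith [hj2]
    · show u < a + st j + (1 - γ) * ℓ ^ p
      have hse : st j = min ((j:ℝ) * ((1 - γ) * ℓ ^ p / 2))
          ((1 - γ) * L ^ p - (1 - γ) * ℓ ^ p) := rfl
      rw [hse]; linarith [hj3]
  -- piece estimates
  have hT : IntegrableOn w (slab n x L (a + s) (a + (1 - γ) * L ^ p + s)) :=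
    integrableOn_slab hwl _ _ _ _
  have hTnn : 0 ≤ ∫ z in slab n x L (a + s) (a + (1 - γ) * L ^ p + s), w z :=
    setIntegral_nonneg (measurableSet_slab _ _ _ _) fun z _ => hw0 z
  have hpiece : ∀ i : (Fin n → Fin mS) × Fin mT, ∫ z in A i, w z ≤
      K ^ M * ∫ z in slab n x L (a + s) (a + (1 - γ) * L ^ p + s), w z := by
    rintro ⟨κ, jf⟩
    set j : ℕ := (jf : ℕ) with hjdef
    set m : ℕ := ⌈(s - st j) / ((1 + γ) * ℓ ^ p)⌉₊ with hm
    have hmM : m ≤ M := by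
      rw [hm, hM]
      apply Nat.ceil_le_ceil
      rw [div_le_div_iff₀ hσpos (mul_pos hγ1'' hγ1'), hsdef, hlp]
      nlinarith [mul_nonneg (hst0 j) (mul_pos hγ1'' hγ1').le,
        mul_nonneg (by linarith : (0:ℝ) ≤ θ - η) (mul_pos (mul_pos hγ1'' hγ1') hLp).le]
    have hE : (s - st j) / ((1 + γ) * ℓ ^ p) * ((1 + γ) * ℓ ^ p) = s - st j :=
      div_mul_cancel₀ _ hσpos.ne'
    have hlow : s ≤ st j + (m : ℝ) * ((1 + γ) * ℓ ^ p) := by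
      have h1 := Nat.le_ceil ((s - st j) / ((1 + γ) * ℓ ^ p))
      rw [← hm] at h1
      linarith [mul_le_mul_of_nonneg_right h1 hσpos.le, hE]
    have hhigh : st j + (m : ℝ) * ((1 + γ) * ℓ ^ p) + (1 - γ) * ℓ ^ p
        ≤ s + (1 - γ) * L ^ p := by
      have hstub : st j ≤ (1 - γ) * L ^ p - (1 - γ) * ℓ ^ p := min_le_right _ _
      rcases Nat.eq_zero_or_pos m with h0 | hpos
      · rw [h0]
        simp only [Nat.cast_zero, zero_mul, add_zero]
        linarith
      · have hnn : 0 ≤ (s - st j) / ((1 + γ) * ℓ ^ p) := by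
          by_contra hcon
          push_neg at hcon
          have hz : m = 0 := by rw [hm]; exact Nat.ceil_eq_zero.mpr hcon.le
          omega
        have h1 := Nat.ceil_lt_add_one hnn
        rw [← hm] at h1
        nlinarith [mul_lt_mul_of_pos_right h1 hσpos, hE, hkey]
    have hiter := iter hγ0 hγ1 hw0 hwl hα0 hβ0 H (cent κ) ℓ hl hKβ hK1 m (a + st j)
    have hsub : slab n (cent κ) ℓ (a + st j + (m : ℝ) * ((1 + γ) * ℓ ^ p))
        (a + st j + (m : ℝ) * ((1 + γ) * ℓ ^ p) + (1 - γ) * ℓ ^ p)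
        ⊆ slab n x L (a + s) (a + (1 - γ) * L ^ p + s) :=
      Set.prod_mono (hcentsub κ) (Ioo_subset_Ioo (by linarith) (by linarith))
    have hmono : ∫ z in slab n (cent κ) ℓ (a + st j + (m : ℝ) * ((1 + γ) * ℓ ^ p))
        (a + st j + (m : ℝ) * ((1 + γ) * ℓ ^ p) + (1 - γ) * ℓ ^ p), w z
        ≤ ∫ z in slab n x L (a + s) (a + (1 - γ) * L ^ p + s), w z :=
      setIntegral_mono_set hT (Filter.Eventually.of_forall fun z => hw0 z)
        (HasSubset.Subset.eventuallyLE hsub)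
    calc ∫ z in A (κ, jf), w z
        ≤ K ^ m * ∫ z in slab n (cent κ) ℓ (a + st j + (m : ℝ) * ((1 + γ) * ℓ ^ p))
            (a + st j + (m : ℝ) * ((1 + γ) * ℓ ^ p) + (1 - γ) * ℓ ^ p), w z := hiter
      _ ≤ K ^ m * ∫ z in slab n x L (a + s) (a + (1 - γ) * L ^ p + s), w z :=
          mul_le_mul_of_nonneg_left hmono (pow_nonneg (by linarith) m)
      _ ≤ K ^ M * ∫ z in slab n x L (a + s) (a + (1 - γ) * L ^ p + s), w z :=
          mul_le_mul_of_nonneg_right (pow_le_pow_right₀ hK1 hmM) hTnn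
  -- sum up
  have hBint : IntegrableOn w (slab n x L a (a + (1 - γ) * L ^ p)) :=
    integrableOn_slab hwl _ _ _ _
  have hAmeas : ∀ i ∈ (Finset.univ : Finset ((Fin n → Fin mS) × Fin mT)),
      MeasurableSet (A i) := fun i _ => measurableSet_slab _ _ _ _
  have hAint : ∀ i ∈ (Finset.univ : Finset ((Fin n → Fin mS) × Fin mT)),
      IntegrableOn w (A i) := fun i _ => integrableOn_slab hwl _ _ _ _
  have hsum := integral_le_sum_cover Finset.univ hw0 A (slab n x L a (a + (1 - γ) * L ^ p))
    (measurableSet_slab x L a (a + (1 - γ) * L ^ p)) hcov hAmeas hBint hAint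
  have hcard : (Finset.univ : Finset ((Fin n → Fin mS) × Fin mT)).card = mS ^ n * mT := by
    simp [Finset.card_univ, Fintype.card_fun]
  rw [himg, hpm]
  calc ∫ z in slab n x L a (a + (1 - γ) * L ^ p), w z
      ≤ ∑ i ∈ (Finset.univ : Finset ((Fin n → Fin mS) × Fin mT)), ∫ z in A i, w z := hsum
    _ ≤ ∑ _i ∈ (Finset.univ : Finset ((Fin n → Fin mS) × Fin mT)),
          K ^ M * ∫ z in slab n x L (a + s) (a + (1 - γ) * L ^ p + s), w z :=
        Finset.sum_le_sum fun i _ => hpiece i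
    _ = ((mS ^ n * mT : ℕ) : ℝ) *
          (K ^ M * ∫ z in slab n x L (a + s) (a + (1 - γ) * L ^ p + s), w z) := by
        rw [Finset.sum_const, hcard, nsmul_eq_mul]
    _ = (mS : ℝ) ^ n * (mT : ℝ) * K ^ M *
          ∫ z in slab n x L (a + s) (a + (1 - γ) * L ^ p + s), w z := by
        push_cast; ring
end
end

section
/- Let w be a weight on ℝ^{n+1}. Assume there exist 0 < α < 1 and 0 < β < 1/2^{n+p} such that w(R^− ∩ {αw > w_{R^+}}) < β w(R^+) for every parabolic rectangle R. Then there exist 0 < α' < 1 and 0 < β' < 1/2^{n+p} such that for every parabolic rectangle R and every measurable set E ⊂ R^− with |E| < α' |R^−| one has w(E) < β' w(R^+). -/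
/-!
Split `E` along the superlevel set `S = {α w > w_{R⁺}}`. On `E ∩ S ⊆ R⁻ ∩ S` the hypothesis
gives `w(E ∩ S) < β w(R⁺)`. Off `S` we have `w ≤ w_{R⁺} / α`, so, since `|R⁻| = |R⁺|`,
`w(E \ S) ≤ |E| w_{R⁺} / α ≤ (α' / α) |R⁺| w_{R⁺} = (α' / α) w(R⁺)`.
Taking `α' ≤ α δ` with `δ = (2^{-(n+p)} - β) / 2` gives the claim with `β' = β + δ`.
-/

open MeasureTheory Set

noncomputable section

open Metric

section SuperlevelSplitting

variable {X : Type*} [MeasurableSpace X] {μ : Measure X} {w : X → ℝ}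

theorem setIntegral_le_setIntegral_inter_superlevel_add {E : Set X} {a c : ℝ}
    (hc : 0 < c) (ha : 0 ≤ a) (hwE : IntegrableOn w E μ) (hE : MeasurableSet E)
    (hEμ : μ E ≠ ⊤) :
    ∫ z in E, w z ∂μ ≤ ∫ z in E ∩ {z | a < c * w z}, w z ∂μ + a / c * μ.real E := by
  set S := {z | a < c * w z}
  have hES : NullMeasurableSet (E \ S) μ := by
    have : NullMeasurableSet Sᶜ (μ.restrict E) :=
      (nullMeasurableSet_lt aemeasurable_const
        (hwE.aestronglyMeasurable.aemeasurable.const_mul c)).compl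
    rw [sdiff_eq_compl_inter]
    exact (nullMeasurableSet_restrict hE.nullMeasurableSet).1 this
  have hlow : ∫ z in E \ S, w z ∂μ ≤ a / c * μ.real E := calc
    ∫ z in E \ S, w z ∂μ ≤ ∫ _ in E \ S, a / c ∂μ :=
      setIntegral_mono_on₀ (hwE.mono_set sdiff_subset)
        (integrableOn_const (measure_ne_top_of_subset sdiff_subset hEμ)) hES
        fun z hz => (le_div_iff₀' hc).2 (not_lt.1 hz.2)
    _ = a / c * μ.real (E \ S) := by rw [setIntegral_const, smul_eq_mul, mul_comm]
    _ ≤ a / c * μ.real E :=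
      mul_le_mul_of_nonneg_left (measureReal_mono sdiff_subset hEμ) (by positivity)
  calc ∫ z in E, w z ∂μ = ∫ z in E ∩ S, w z ∂μ + ∫ z in E \ S, w z ∂μ := by
        rw [← setIntegral_union₀ disjoint_sdiff_inter.symm.aedisjoint hES
          (hwE.mono_set inter_subset_left) (hwE.mono_set sdiff_subset), inter_union_sdiff]
    _ ≤ _ := by gcongr

theorem setIntegral_lt_of_setIntegral_superlevel_lt {M P E : Set X} {α β κ : ℝ}
    (hα : 0 < α) (hw : ∀ z, 0 ≤ w z) (hwM : IntegrableOn w M μ) (hMP : μ M = μ P) (hP : μ P ≠ ⊤)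
    (hEM : E ⊆ M) (hE : MeasurableSet E) (hEμ : μ.real E ≤ α * κ * μ.real M)
    (H : ∫ z in M ∩ {z | ⨍ y in P, w y ∂μ < α * w z}, w z ∂μ < β * ∫ z in P, w z ∂μ) :
    ∫ z in E, w z ∂μ < (β + κ) * ∫ z in P, w z ∂μ := by
  set A := ⨍ y in P, w y ∂μ
  have hA : 0 ≤ A := integral_nonneg hw
  have hsuper :
      ∫ z in E ∩ {z | A < α * w z}, w z ∂μ ≤ ∫ z in M ∩ {z | A < α * w z}, w z ∂μ :=
    setIntegral_mono_set (hwM.mono_set inter_subset_left) (ae_of_all _ hw)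
      (inter_subset_inter_left _ hEM).eventuallyLE
  have hsub : A / α * μ.real E ≤ κ * ∫ z in P, w z ∂μ := calc
    A / α * μ.real E ≤ A / α * (α * κ * μ.real M) := by gcongr
    _ = κ * (μ.real P • A) := by
      rw [measureReal_def, measureReal_def, hMP, smul_eq_mul]; field_simp
    _ = κ * ∫ z in P, w z ∂μ := by rw [measure_smul_setAverage _ hP]
  calc ∫ z in E, w z ∂μ ≤ ∫ z in E ∩ {z | A < α * w z}, w z ∂μ + A / α * μ.real E :=
        setIntegral_le_setIntegral_inter_superlevel_add hα hA (hwM.mono_set hEM) hE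
          (measure_ne_top_of_subset hEM (hMP ▸ hP))
    _ < β * ∫ z in P, w z ∂μ + κ * ∫ z in P, w z ∂μ :=
        add_lt_add_of_lt_of_le (hsuper.trans_lt H) hsub
    _ = (β + κ) * ∫ z in P, w z ∂μ := by ring

end SuperlevelSplitting

section ParabolicRectangles

variable (n : ℕ) (p γ : ℝ) (x : Fin n → ℝ) (t : ℝ) {L : ℝ}

theorem parQ_eq_closedBall (hL : 0 ≤ L) : parQ n x L = closedBall x (L / 2) := by
  ext y
  simp [parQ, closedBall_pi _ (by positivity : 0 ≤ L / 2), Real.dist_eq]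

theorem isBounded_pMinus (hL : 0 ≤ L) : Bornology.IsBounded (pMinus n p γ x t L) := by
  rw [pMinus, parQ_eq_closedBall n x hL]
  exact isBounded_closedBall.prod (isBounded_Ioo _ _)

theorem isBounded_pPlus (hL : 0 ≤ L) : Bornology.IsBounded (pPlus n p γ x t L) := by
  rw [pPlus, parQ_eq_closedBall n x hL]
  exact isBounded_closedBall.prod (isBounded_Ioo _ _)

theorem volume_pMinus_eq_volume_pPlus (L : ℝ) :
    volume (pMinus n p γ x t L) = volume (pPlus n p γ x t L) := by
  simp only [pMinus, pPlus, Measure.volume_eq_prod, Measure.prod_prod, Real.volume_Ioo]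
  ring_nf

end ParabolicRectangles

theorem stmt_9_general (n : ℕ) (p : ℝ)
    (w : (Fin n → ℝ) × ℝ → ℝ) (hw : IsWeight n w)
    (α β : ℝ) (hα0 : 0 < α) (hβ0 : 0 < β)
    (hβ1 : β < 1 / (2 : ℝ) ^ ((n : ℝ) + p))
    (H : ∀ (x : Fin n → ℝ) (t L : ℝ), 0 < L →
      (∫ z in pMinus n p 0 x t L ∩ {z | (⨍ y in pPlus n p 0 x t L, w y) < α * w z}, w z) <
        β * ∫ z in pPlus n p 0 x t L, w z) :
    ∃ α' : ℝ, 0 < α' ∧ α' < 1 ∧ ∃ β' : ℝ, 0 < β' ∧ β' < 1 / (2 : ℝ) ^ ((n : ℝ) + p) ∧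
      ∀ (x : Fin n → ℝ) (t L : ℝ), 0 < L →
        ∀ E ⊆ pMinus n p 0 x t L, MeasurableSet E →
          (volume E).toReal < α' * (volume (pMinus n p 0 x t L)).toReal →
          (∫ z in E, w z) < β' * ∫ z in pPlus n p 0 x t L, w z := by
  set c := 1 / (2 : ℝ) ^ ((n : ℝ) + p)
  set δ := (c - β) / 2 with hδ_def
  have hδ : 0 < δ := by linarith
  refine ⟨min (α * δ) (1 / 2), lt_min (mul_pos hα0 hδ) one_half_pos,
    (min_le_right _ _).trans_lt one_half_lt_one, β + δ, by positivity, by linarith, ?_⟩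
  intro x t L hL E hEM hE hEμ
  have hwM : IntegrableOn w (pMinus n p 0 x t L) :=
    (hw.2.integrableOn_isCompact (isBounded_pMinus n p 0 x t hL.le).isCompact_closure).mono_set
      subset_closure
  refine setIntegral_lt_of_setIntegral_superlevel_lt hα0 hw.1 hwM
    (volume_pMinus_eq_volume_pPlus n p 0 x t L)
    (isBounded_pPlus n p 0 x t hL.le).measure_lt_top.ne hEM hE (hEμ.le.trans ?_) (H x t L hL)
  exact mul_le_mul_of_nonneg_right (min_le_left _ _) ENNReal.toReal_nonneg

/-- The superlevel measure condition implies the qualitative measure condition. -/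
theorem stmt_9 (n : ℕ) (p : ℝ) (hp : 1 < p)
    (w : (Fin n → ℝ) × ℝ → ℝ) (hw : IsWeight n w)
    (α β : ℝ) (hα0 : 0 < α) (hα1 : α < 1) (hβ0 : 0 < β)
    (hβ1 : β < 1 / (2 : ℝ) ^ ((n : ℝ) + p))
    (H : ∀ (x : Fin n → ℝ) (t L : ℝ), 0 < L →
      (∫ z in pMinus n p 0 x t L ∩ {z | (⨍ y in pPlus n p 0 x t L, w y) < α * w z}, w z) <
        β * ∫ z in pPlus n p 0 x t L, w z) :
    ∃ α' : ℝ, 0 < α' ∧ α' < 1 ∧ ∃ β' : ℝ, 0 < β' ∧ β' < 1 / (2 : ℝ) ^ ((n : ℝ) + p) ∧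
      ∀ (x : Fin n → ℝ) (t L : ℝ), 0 < L →
        ∀ E ⊆ pMinus n p 0 x t L, MeasurableSet E →
          (volume E).toReal < α' * (volume (pMinus n p 0 x t L)).toReal →
          (∫ z in E, w z) < β' * ∫ z in pPlus n p 0 x t L, w z :=
  stmt_9_general n p w hw α β hα0 hβ0 hβ1 H
end
end

section
/- Let 1 < q < ∞. There exists a constant c, depending only on n, p and q (one may take c = q 2^{q+1} 5^{n+p}/(q−1)), such that for every locally integrable function f on ℝ^{n+1}, ∫_{ℝ^{n+1}} (M^+f)^q ≤ c ∫_{ℝ^{n+1}} |f|^q. -/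
open MeasureTheory Set ENNReal

noncomputable section

/-- The uncentered forward-in-time parabolic maximal function. -/
def Mplus (n : ℕ) (p : ℝ) (f : (Fin n → ℝ) × ℝ → ℝ) (z : (Fin n → ℝ) × ℝ) : ℝ≥0∞ :=
  ⨆ (x : Fin n → ℝ) (t : ℝ) (L : ℝ) (_ : 0 < L) (_ : z ∈ pMinus n p 0 x t L),
    ENNReal.ofReal (⨍ y in pPlus n p 0 x t L, |f y|)

/-!
Enlarging a rectangle by the factor 2 bounds `Mplus f` by `2^(n+p)` times a variant
`MplusOpen f` whose lower parts are open, so that it is lower semicontinuous, hence measurable.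
Two parabolic rectangles that meet, the first at most twice the size of the second, lie in the
sixfold enlargement of the second; so the Vitali covering lemma gives the weak type `(1,1)`
estimate `λ |{MplusOpen f > λ}| ≤ 2 · 6^(n+p) ‖f‖₁`. Since
`MplusOpen f ≤ MplusOpen (f 1_{|f| > t}) + t`, Marcinkiewicz's argument, run through the layer
cake formula, turns this into the strong type `(q,q)` estimate.
-/

section Marcinkiewicz

variable {α : Type*} [MeasurableSpace α] {μ : Measure α}

lemma lintegral_Ioi_zero_rpow_eq_top (r : ℝ) :
    ∫⁻ t in Ioi (0 : ℝ), ENNReal.ofReal (t ^ r) = ∞ := by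
  by_contra h
  refine not_integrableOn_Ioi_rpow r ((lintegral_ofReal_ne_top_iff_integrable ?_ ?_).1 h)
  · exact (measurable_id.pow_const r).aestronglyMeasurable
  · filter_upwards [ae_restrict_mem measurableSet_Ioi] with t ht
    exact Real.rpow_nonneg (le_of_lt ht) r

theorem lintegral_rpow_eq_lintegral_meas_ofReal_lt_mul {h : α → ℝ≥0∞}
    (hh : AEMeasurable h μ) {q : ℝ} (hq : 0 < q) :
    ∫⁻ a, h a ^ q ∂μ =
      ENNReal.ofReal q *
        ∫⁻ t in Ioi 0, μ {a | ENNReal.ofReal t < h a} * ENNReal.ofReal (t ^ (q - 1)) := by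
  by_cases htop : μ {a | h a = ∞} = 0
  · have hfin : ∀ᵐ a ∂μ, h a ≠ ∞ := ae_iff.2 (by simpa using htop)
    have hlhs : ∫⁻ a, h a ^ q ∂μ = ∫⁻ a, ENNReal.ofReal ((h a).toReal ^ q) ∂μ := by
      refine lintegral_congr_ae ?_
      filter_upwards [hfin] with a ha
      rw [← ofReal_rpow_of_nonneg toReal_nonneg hq.le, ofReal_toReal ha]
    rw [hlhs, lintegral_rpow_eq_lintegral_meas_lt_mul μ (ae_of_all _ fun a => toReal_nonneg)
      hh.ennreal_toReal hq]
    congr 1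
    · refine setLIntegral_congr_fun measurableSet_Ioi fun t ht => ?_
      congr 1
      refine measure_congr (Filter.eventuallyEq_set.2 ?_)
      filter_upwards [hfin] with a ha
      exact (ofReal_lt_iff_lt_toReal (le_of_lt ht) ha).symm
  · have hlhs : ∫⁻ a, h a ^ q ∂μ = ∞ := by
      refine lintegral_eq_top_of_measure_eq_top_ne_zero (hh.pow_const q) ?_
      simpa only [rpow_eq_top_iff_of_pos hq] using htop
    have hrhs : ∫⁻ t in Ioi 0, μ {a | h a = ∞} * ENNReal.ofReal (t ^ (q - 1)) = ∞ := by
      rw [lintegral_const_mul _ (by fun_prop), lintegral_Ioi_zero_rpow_eq_top, mul_top htop]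
    rw [hlhs, eq_comm, ← top_le_iff]
    calc ∞ = ENNReal.ofReal q *
          ∫⁻ t in Ioi 0, μ {a | h a = ∞} * ENNReal.ofReal (t ^ (q - 1)) := by
          rw [hrhs, mul_top (by simpa using hq)]
      _ ≤ _ := by
          gcongr with t a
          exact fun (ha : h a = ∞) => ha ▸ ofReal_lt_top

lemma lintegral_Ioo_zero_rpow {r : ℝ} (hr : -1 < r) {b : ℝ} (hb : 0 ≤ b) :
    ∫⁻ t in Ioo 0 b, ENNReal.ofReal (t ^ r) = ENNReal.ofReal (b ^ (r + 1) / (r + 1)) := by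
  have hint : IntegrableOn (fun t : ℝ => t ^ r) (Ioo 0 b) :=
    (intervalIntegral.intervalIntegrable_rpow' hr (a := 0) (b := b)).1.mono_set
      Ioo_subset_Ioc_self
  rw [← ofReal_integral_eq_lintegral_ofReal hint, integral_Ioc_eq_integral_Ioo.symm,
    ← intervalIntegral.integral_of_le hb, integral_rpow (Or.inl hr),
    Real.zero_rpow (by linarith), sub_zero]
  filter_upwards [ae_restrict_mem measurableSet_Ioo] with t ht
  exact Real.rpow_nonneg ht.1.le r

lemma lintegral_Ioi_ite_lt_two_mul {q : ℝ} (hq : 1 < q) {a : ℝ} (ha : 0 ≤ a) :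
    ∫⁻ t in Ioi 0, (if t < 2 * a then ENNReal.ofReal (2 * t ^ (q - 2) * a) else 0) =
      ENNReal.ofReal (2 ^ q / (q - 1) * a ^ q) := by
  have hind : (fun t => if t < 2 * a then ENNReal.ofReal (2 * t ^ (q - 2) * a) else 0) =
      (Iio (2 * a)).indicator fun t => ENNReal.ofReal (2 * a) * ENNReal.ofReal (t ^ (q - 2)) := by
    ext t
    simp only [indicator_apply, mem_Iio, ← ofReal_mul (by positivity : 0 ≤ 2 * a)]
    ring_nf
  rw [hind, lintegral_indicator measurableSet_Iio, Measure.restrict_restrict measurableSet_Iio,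
    Iio_inter_Ioi, lintegral_const_mul' _ _ ofReal_ne_top,
    lintegral_Ioo_zero_rpow (by linarith) (by positivity), ← ofReal_mul (by positivity),
    show q - 2 + 1 = q - 1 by ring]
  congr 1
  have hpow : 2 ^ q * a ^ q = (2 * a) ^ (q - 1) * (2 * a) := by
    rw [← Real.mul_rpow zero_le_two ha]
    simpa using Real.rpow_add' (by positivity : 0 ≤ 2 * a) (show q - 1 + 1 ≠ 0 by linarith)
  rw [div_mul_eq_mul_div, hpow]
  ring

lemma meas_lt_mul_rpow_le_lintegral_ite {T : α → ℝ≥0∞} {f : α → ℝ} (hf : Measurable f)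
    {K : ℝ≥0∞}
    (hTf : ∀ t : ℝ, 0 < t → ENNReal.ofReal t * μ {a | ENNReal.ofReal (2 * t) < T a} ≤
      K * ∫⁻ a in {a | t < |f a|}, ENNReal.ofReal |f a| ∂μ)
    (q : ℝ) {t : ℝ} (ht : 0 < t) :
    μ {a | ENNReal.ofReal t < T a} * ENNReal.ofReal (t ^ (q - 1)) ≤ K *
      ∫⁻ a, (if t < 2 * |f a| then ENNReal.ofReal (2 * t ^ (q - 2) * |f a|) else 0) ∂μ := by
  have hint :
      ∫⁻ a, (if t < 2 * |f a| then ENNReal.ofReal (2 * t ^ (q - 2) * |f a|) else 0) ∂μ =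
        ENNReal.ofReal (2 * t ^ (q - 2)) *
          ∫⁻ a in {a | t / 2 < |f a|}, ENNReal.ofReal |f a| ∂μ := by
    rw [← lintegral_const_mul' _ _ ofReal_ne_top,
      ← lintegral_indicator (measurableSet_lt (by fun_prop) (by fun_prop))]
    refine lintegral_congr fun a => ?_
    simp only [indicator_apply, mem_ofPred_eq, div_lt_iff₀' (two_pos : (0 : ℝ) < 2),
      ofReal_mul (by positivity : 0 ≤ 2 * t ^ (q - 2))]
  have hpow : t ^ (q - 1) = 2 * t ^ (q - 2) * (t / 2) := by
    rw [show q - 1 = q - 2 + 1 by ring, Real.rpow_add_one ht.ne']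
    ring
  calc μ {a | ENNReal.ofReal t < T a} * ENNReal.ofReal (t ^ (q - 1))
      = ENNReal.ofReal (2 * t ^ (q - 2)) *
          (ENNReal.ofReal (t / 2) * μ {a | ENNReal.ofReal (2 * (t / 2)) < T a}) := by
        rw [hpow, ofReal_mul (by positivity), mul_div_cancel₀ t two_ne_zero]
        ring
    _ ≤ ENNReal.ofReal (2 * t ^ (q - 2)) *
          (K * ∫⁻ a in {a | t / 2 < |f a|}, ENNReal.ofReal |f a| ∂μ) :=
        mul_le_mul_right (hTf _ (half_pos ht)) _
    _ = _ := by rw [hint]; ring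

theorem lintegral_rpow_le_of_meas_lt_le [SFinite μ] {q : ℝ} (hq : 1 < q) {T : α → ℝ≥0∞}
    (hT : AEMeasurable T μ) {f : α → ℝ} (hf : Measurable f) {K : ℝ≥0∞}
    (hTf : ∀ t : ℝ, 0 < t → ENNReal.ofReal t * μ {a | ENNReal.ofReal (2 * t) < T a} ≤
      K * ∫⁻ a in {a | t < |f a|}, ENNReal.ofReal |f a| ∂μ) :
    ∫⁻ a, T a ^ q ∂μ ≤
      ENNReal.ofReal (2 ^ q * q / (q - 1)) * K * ∫⁻ a, ENNReal.ofReal (|f a| ^ q) ∂μ := by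
  set G : ℝ → α → ℝ≥0∞ := fun t a =>
    if t < 2 * |f a| then ENNReal.ofReal (2 * t ^ (q - 2) * |f a|) else 0
  have hG : Measurable (Function.uncurry G) := by
    refine Measurable.ite (measurableSet_lt measurable_fst ?_) ?_ measurable_const <;> fun_prop
  have hc : 0 ≤ 2 ^ q / (q - 1) := div_nonneg (by positivity) (by linarith)
  calc ∫⁻ a, T a ^ q ∂μ
      = ENNReal.ofReal q *
          ∫⁻ t in Ioi 0, μ {a | ENNReal.ofReal t < T a} * ENNReal.ofReal (t ^ (q - 1)) :=
        lintegral_rpow_eq_lintegral_meas_ofReal_lt_mul hT (by linarith)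
    _ ≤ ENNReal.ofReal q * ∫⁻ t in Ioi 0, K * ∫⁻ a, G t a ∂μ :=
        mul_le_mul_right (setLIntegral_mono' measurableSet_Ioi fun t ht =>
          meas_lt_mul_rpow_le_lintegral_ite hf hTf q ht) _
    _ = ENNReal.ofReal q * (K * ∫⁻ a, (∫⁻ t in Ioi 0, G t a) ∂μ) := by
        have hGm : Measurable fun t => ∫⁻ a, G t a ∂μ := hG.lintegral_prod_right'
        rw [lintegral_const_mul _ hGm, lintegral_lintegral_swap hG.aemeasurable]
    _ = _ := by
        simp_rw [G, lintegral_Ioi_ite_lt_two_mul hq (abs_nonneg _), ofReal_mul hc]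
        rw [lintegral_const_mul' _ _ ofReal_ne_top, mul_div_right_comm, ofReal_mul hc]
        ring

end Marcinkiewicz

section Averages

variable {α : Type*} [MeasurableSpace α] {μ : Measure α}

lemma ofReal_setAverage_le_setLAverage {f : α → ℝ} (hf : ∀ a, 0 ≤ f a) (s : Set α) :
    ENNReal.ofReal (⨍ a in s, f a ∂μ) ≤ ⨍⁻ a in s, ENNReal.ofReal (f a) ∂μ := by
  by_cases hi : IntegrableOn f s μ
  · rw [ofReal_setAverage hi (ae_of_all _ hf), setLAverage_eq]
  · rw [setAverage_eq, integral_undef hi, smul_zero, ofReal_zero]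
    exact bot_le

lemma setLAverage_le_mul_setLAverage {s t : Set α} (hst : s ⊆ t) {c : ℝ≥0∞} (hc0 : c ≠ 0)
    (hc : c ≠ ∞) (hμ : μ t = c * μ s) (g : α → ℝ≥0∞) :
    ⨍⁻ a in s, g a ∂μ ≤ c * ⨍⁻ a in t, g a ∂μ := by
  rw [setLAverage_eq, setLAverage_eq, hμ, ← mul_div_assoc, ENNReal.mul_div_mul_left _ _ hc0 hc]
  exact ENNReal.div_le_div_right (lintegral_mono_set hst) _

lemma mul_measure_le_setLIntegral_of_le_setLAverage {s : Set α} {g : α → ℝ≥0∞}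
    {l : ℝ≥0∞} (hl : l ≤ ⨍⁻ a in s, g a ∂μ) :
    l * μ s ≤ ∫⁻ a in s, g a ∂μ :=
  mul_le_of_le_div (setLAverage_eq μ g s ▸ hl)

lemma setLAverage_add_const {s : Set α} (hs₀ : μ s ≠ 0) (hs : μ s ≠ ∞)
    (g : α → ℝ≥0∞) (c : ℝ≥0∞) :
    ⨍⁻ a in s, (g a + c) ∂μ = ⨍⁻ a in s, g a ∂μ + c := by
  rw [setLAverage_eq, setLAverage_eq, lintegral_add_right _ measurable_const, setLIntegral_const,
    ENNReal.add_div, ENNReal.mul_div_cancel_right hs₀ hs]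

end Averages

section ParabolicRectangles

variable {n : ℕ} {p : ℝ}

def parQOpen (n : ℕ) (x : Fin n → ℝ) (L : ℝ) : Set (Fin n → ℝ) :=
  {y | ∀ i, |y i - x i| < L / 2}

def pMinusOpen (n : ℕ) (p : ℝ) (x : Fin n → ℝ) (t L : ℝ) : Set ((Fin n → ℝ) × ℝ) :=
  parQOpen n x L ×ˢ Ioo (t - L ^ p) t

lemma parQ_eq_Icc (x : Fin n → ℝ) (L : ℝ) :
    parQ n x L = Icc (fun i => x i - L / 2) (fun i => x i + L / 2) := by
  ext y
  simp only [parQ, mem_ofPred_eq, mem_Icc, Pi.le_def, abs_le, ← forall_and]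
  exact forall_congr' fun i => by constructor <;> intro h <;> constructor <;> linarith [h.1, h.2]

lemma isOpen_pMinusOpen (x : Fin n → ℝ) (t L : ℝ) : IsOpen (pMinusOpen n p x t L) := by
  have hQ : parQOpen n x L = pi univ fun i => Ioo (x i - L / 2) (x i + L / 2) := by
    ext y
    simp only [parQOpen, mem_ofPred_eq, mem_pi, mem_univ, true_implies, mem_Ioo, abs_lt]
    exact forall_congr' fun i => by constructor <;> intro h <;> constructor <;> linarith [h.1, h.2]
  rw [pMinusOpen, hQ]
  exact (isOpen_set_pi finite_univ fun i _ => isOpen_Ioo).prod isOpen_Ioo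

lemma measurableSet_pPlus (x : Fin n → ℝ) (t L : ℝ) : MeasurableSet (pPlus n p 0 x t L) := by
  rw [pPlus, parQ_eq_Icc]
  exact measurableSet_Icc.prod measurableSet_Ioo

lemma volume_pPlus (x : Fin n → ℝ) (t : ℝ) {L : ℝ} (hL : 0 ≤ L) :
    volume (pPlus n p 0 x t L) = ENNReal.ofReal (L ^ n * L ^ p) := by
  rw [pPlus, Measure.volume_eq_prod, Measure.prod_prod, parQ_eq_Icc, Real.volume_Icc_pi,
    Real.volume_Ioo, ofReal_mul (by positivity), ofReal_pow hL]
  congr 1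
  · simp [show ∀ a : ℝ, a + L / 2 - (a - L / 2) = L by intro a; ring]
  · ring_nf

lemma volume_pPlus_mul (x : Fin n → ℝ) (t : ℝ) {c L : ℝ} (hc : 0 ≤ c) (hL : 0 ≤ L) :
    volume (pPlus n p 0 x t (c * L)) =
      ENNReal.ofReal (c ^ n * c ^ p) * volume (pPlus n p 0 x t L) := by
  rw [volume_pPlus x t (mul_nonneg hc hL), volume_pPlus x t hL, ← ofReal_mul (by positivity),
    mul_pow, Real.mul_rpow hc hL]
  ring_nf

lemma volume_pRect (x : Fin n → ℝ) (t L : ℝ) :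
    volume (pRect n p x t L) = 2 * volume (pPlus n p 0 x t L) := by
  rw [pRect, pPlus, Measure.volume_eq_prod, Measure.prod_prod, Measure.prod_prod, Real.volume_Ioo,
    Real.volume_Ioo, show t + L ^ p - (t - L ^ p) = 2 * (t + L ^ p - (t + 0 * L ^ p)) by ring,
    ofReal_mul zero_le_two, ofReal_ofNat]
  ring

lemma volume_pRect_six_mul (x : Fin n → ℝ) (t : ℝ) {L : ℝ} (hL : 0 ≤ L) :
    volume (pRect n p x t (6 * L)) =
      ENNReal.ofReal (2 * (6 ^ n * 6 ^ p)) * volume (pPlus n p 0 x t L) := by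
  rw [volume_pRect, volume_pPlus_mul x t (by norm_num) hL, ofReal_mul zero_le_two, ofReal_ofNat,
    mul_assoc]

lemma volume_pPlus_ne_zero (x : Fin n → ℝ) (t : ℝ) {L : ℝ} (hL : 0 < L) :
    volume (pPlus n p 0 x t L) ≠ 0 := by
  rw [volume_pPlus x t hL.le]
  exact (ofReal_pos.2 (by positivity)).ne'

lemma volume_pPlus_ne_top (x : Fin n → ℝ) (t : ℝ) {L : ℝ} (hL : 0 ≤ L) :
    volume (pPlus n p 0 x t L) ≠ ∞ := by
  rw [volume_pPlus x t hL]
  exact ofReal_ne_top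

lemma ofReal_le_volume_pPlus (hp : 1 ≤ p) (x : Fin n → ℝ) (t : ℝ) {L : ℝ} (hL : 1 ≤ L) :
    ENNReal.ofReal L ≤ volume (pPlus n p 0 x t L) := by
  rw [volume_pPlus x t (by linarith)]
  refine ofReal_le_ofReal ?_
  calc L ≤ L ^ p := by simpa using Real.rpow_le_rpow_of_exponent_le hL hp
    _ ≤ L ^ n * L ^ p := le_mul_of_one_le_left (by positivity) (one_le_pow₀ hL)

lemma le_max_one_of_lt_setLAverage (hp : 1 ≤ p) {g : (Fin n → ℝ) × ℝ → ℝ≥0∞}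
    (hg : ∫⁻ z, g z ≠ ∞) {l : ℝ≥0∞} (hl : l ≠ 0) {x : Fin n → ℝ} {t L : ℝ}
    (hlt : l < ⨍⁻ z in pPlus n p 0 x t L, g z ∂volume) :
    L ≤ max 1 ((∫⁻ z, g z) / l).toReal := by
  rcases le_total L 1 with h | h
  · exact le_max_of_le_left h
  refine le_max_of_le_right ((ofReal_le_iff_le_toReal (div_ne_top hg hl)).1 ?_)
  rw [ENNReal.le_div_iff_mul_le (Or.inl hl) (Or.inr hg), mul_comm]
  exact (mul_le_mul_right (ofReal_le_volume_pPlus hp x t h) l).trans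
    ((mul_measure_le_setLIntegral_of_le_setLAverage hlt.le).trans (setLIntegral_le_lintegral _ _))

lemma pMinusOpen_subset_pRect (x : Fin n → ℝ) (t : ℝ) {L : ℝ} (hL : 0 < L) :
    pMinusOpen n p x t L ⊆ pRect n p x t L := by
  rintro ⟨y, s⟩ ⟨hy, hs⟩
  have := Real.rpow_pos_of_pos hL p
  exact ⟨fun i => (hy i).le, hs.1, by linarith [hs.2]⟩

lemma pPlus_subset_pRect (x : Fin n → ℝ) (t : ℝ) {L : ℝ} (hL : 0 < L) :
    pPlus n p 0 x t L ⊆ pRect n p x t L := by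
  rintro ⟨y, s⟩ ⟨hy, hs⟩
  have := Real.rpow_pos_of_pos hL p
  exact ⟨hy, by linarith [hs.1], hs.2⟩

lemma nonempty_interior_pRect (x : Fin n → ℝ) (t : ℝ) {L : ℝ} (hL : 0 < L) :
    (interior (pRect n p x t L)).Nonempty := by
  refine .mono ((isOpen_pMinusOpen x t L).subset_interior_iff.2 (pMinusOpen_subset_pRect x t hL)) ?_
  have := Real.rpow_pos_of_pos hL p
  exact ⟨(x, t - L ^ p / 2), fun i => by simpa using half_pos hL, by linarith, by linarith⟩

lemma two_mul_rpow_add_rpow_le_six_mul_rpow (hp : 1 ≤ p) {a b : ℝ} (ha : 0 ≤ a) (hb : 0 ≤ b)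
    (hab : a ≤ 2 * b) : 2 * a ^ p + b ^ p ≤ (6 * b) ^ p := by
  have ha2 : a ^ p ≤ 2 ^ p * b ^ p :=
    (Real.rpow_le_rpow ha hab (by linarith)).trans_eq (Real.mul_rpow zero_le_two hb)
  have h3 : (3 : ℝ) ≤ 3 ^ p := by simpa using Real.rpow_le_rpow_of_exponent_le (by norm_num) hp
  have h2 : (1 : ℝ) ≤ 2 ^ p := Real.one_le_rpow one_le_two (by linarith)
  have hbp := Real.rpow_nonneg hb p
  rw [show (6 : ℝ) = 3 * 2 by norm_num, Real.mul_rpow (by norm_num) hb,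
    Real.mul_rpow (by norm_num) (by norm_num)]
  nlinarith [mul_le_mul_of_nonneg_right h3 (mul_nonneg (by positivity : (0:ℝ) ≤ 2 ^ p) hbp),
    mul_le_mul_of_nonneg_right h2 hbp]

lemma pRect_subset_pRect_six_mul (hp : 1 ≤ p) {x x' : Fin n → ℝ} {t t' L L' : ℝ}
    (hL : 0 ≤ L) (hL' : 0 ≤ L') (hLL : L ≤ 2 * L')
    (hne : (pRect n p x t L ∩ pRect n p x' t' L').Nonempty) :
    pRect n p x t L ⊆ pRect n p x' t' (6 * L') := by
  obtain ⟨w, ⟨hw, hwt⟩, ⟨hw', hwt'⟩⟩ := hne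
  have key := two_mul_rpow_add_rpow_le_six_mul_rpow hp hL hL' hLL
  rintro ⟨y, s⟩ ⟨hy, hs⟩
  refine ⟨fun i => ?_, ?_, ?_⟩
  · have h := hy i
    have h' := hw i
    have h'' := hw' i
    simp only [abs_le] at h h' h'' ⊢
    constructor <;> linarith [h.1, h.2, h'.1, h'.2, h''.1, h''.2]
  · linarith [hs.1, hwt.2, hwt'.1]
  · linarith [hs.2, hwt.1, hwt'.2]

lemma exists_pairwiseDisjoint_pRect_covering (hp : 1 ≤ p)
    (T : Set ((Fin n → ℝ) × ℝ × ℝ)) (hT : ∀ w ∈ T, 0 < w.2.2) {R : ℝ}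
    (hR : ∀ w ∈ T, w.2.2 ≤ R) :
    ∃ u ⊆ T, u.Countable ∧ u.PairwiseDisjoint (fun w => pRect n p w.1 w.2.1 w.2.2) ∧
      ∀ w ∈ T, ∃ b ∈ u, pRect n p w.1 w.2.1 w.2.2 ⊆ pRect n p b.1 b.2.1 (6 * b.2.2) := by
  obtain ⟨u, huT, hdisj, hcov⟩ := Vitali.exists_disjoint_subfamily_covering_enlargement
    (fun w => pRect n p w.1 w.2.1 w.2.2) T (fun w => w.2.2) 2 one_lt_two (fun w hw => (hT w hw).le)
    R hR fun w hw => (nonempty_interior_pRect _ _ (hT w hw)).mono interior_subset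
  refine ⟨u, huT, hdisj.countable_of_nonempty_interior fun w hw =>
    nonempty_interior_pRect _ _ (hT w (huT hw)), hdisj, fun w hw => ?_⟩
  obtain ⟨b, hbu, hne, hwb⟩ := hcov w hw
  exact ⟨b, hbu, pRect_subset_pRect_six_mul hp (hT w hw).le (hT b (huT hbu)).le hwb hne⟩

end ParabolicRectangles

section MaximalFunction

variable {n : ℕ} {p : ℝ}

/-- Open lower parts make this variant of `Mplus` lower semicontinuous; the `ℝ≥0∞`-valued
average `⨍⁻` (unlike `⨍`, which is `0` off integrable functions) spares integrability
assumptions. -/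
def MplusOpen (n : ℕ) (p : ℝ) (f : (Fin n → ℝ) × ℝ → ℝ)
    (z : (Fin n → ℝ) × ℝ) : ℝ≥0∞ :=
  ⨆ (x : Fin n → ℝ) (t : ℝ) (L : ℝ) (_ : 0 < L) (_ : z ∈ pMinusOpen n p x t L),
    ⨍⁻ y in pPlus n p 0 x t L, ENNReal.ofReal |f y| ∂volume

lemma setLAverage_le_MplusOpen (f : (Fin n → ℝ) × ℝ → ℝ) {x : Fin n → ℝ} {t L : ℝ}
    (hL : 0 < L) {z : (Fin n → ℝ) × ℝ} (hz : z ∈ pMinusOpen n p x t L) :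
    ⨍⁻ y in pPlus n p 0 x t L, ENNReal.ofReal |f y| ∂volume ≤ MplusOpen n p f z :=
  le_iSup_of_le x <| le_iSup_of_le t <| le_iSup_of_le L <| le_iSup_of_le hL <|
    le_iSup_of_le hz le_rfl

lemma lowerSemicontinuous_MplusOpen (f : (Fin n → ℝ) × ℝ → ℝ) :
    LowerSemicontinuous (MplusOpen n p f) := by
  refine lowerSemicontinuous_iff_isOpen_preimage.2 fun c => ?_
  have hU : MplusOpen n p f ⁻¹' Ioi c = ⋃ (x : Fin n → ℝ) (t : ℝ) (L : ℝ) (_ : 0 < L)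
      (_ : c < ⨍⁻ y in pPlus n p 0 x t L, ENNReal.ofReal |f y| ∂volume),
      pMinusOpen n p x t L := by
    ext z
    simp only [mem_preimage, mem_Ioi, MplusOpen, lt_iSup_iff, mem_iUnion]
    tauto
  rw [hU]
  exact isOpen_iUnion fun x => isOpen_iUnion fun t => isOpen_iUnion fun L =>
    isOpen_iUnion fun _ => isOpen_iUnion fun _ => isOpen_pMinusOpen x t L

lemma Mplus_le_MplusOpen (hp : 0 ≤ p) (f : (Fin n → ℝ) × ℝ → ℝ)
    (z : (Fin n → ℝ) × ℝ) :
    Mplus n p f z ≤ ENNReal.ofReal (2 ^ n * 2 ^ p) * MplusOpen n p f z := by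
  refine iSup_le fun x => iSup_le fun t => iSup_le fun L => iSup_le fun hL => iSup_le fun hz => ?_
  have hL2 : L ^ p ≤ (2 * L) ^ p := Real.rpow_le_rpow hL.le (by linarith) hp
  have hz2 : z ∈ pMinusOpen n p x t (2 * L) := by
    obtain ⟨hzx, hzt⟩ := hz
    refine ⟨fun i => (hzx i).trans_lt (by linarith), by linarith [hzt.1], by simpa using hzt.2⟩
  have hsub : pPlus n p 0 x t L ⊆ pPlus n p 0 x t (2 * L) := by
    rintro ⟨y, s⟩ ⟨hy, hs⟩
    exact ⟨fun i => (hy i).trans (by linarith), by simpa using hs.1, by linarith [hs.2]⟩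
  calc ENNReal.ofReal (⨍ y in pPlus n p 0 x t L, |f y|)
      ≤ ⨍⁻ y in pPlus n p 0 x t L, ENNReal.ofReal |f y| ∂volume :=
        ofReal_setAverage_le_setLAverage (fun y => abs_nonneg (f y)) _
    _ ≤ ENNReal.ofReal (2 ^ n * 2 ^ p) *
          ⨍⁻ y in pPlus n p 0 x t (2 * L), ENNReal.ofReal |f y| ∂volume :=
        setLAverage_le_mul_setLAverage hsub (ofReal_pos.2 (by positivity)).ne' ofReal_ne_top
          (volume_pPlus_mul x t zero_le_two hL.le) _
    _ ≤ ENNReal.ofReal (2 ^ n * 2 ^ p) * MplusOpen n p f z :=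
        mul_le_mul_right (setLAverage_le_MplusOpen f (by positivity) hz2) _

lemma MplusOpen_le_MplusOpen_indicator_add (f : (Fin n → ℝ) × ℝ → ℝ) {c : ℝ}
    (z : (Fin n → ℝ) × ℝ) :
    MplusOpen n p f z ≤ MplusOpen n p ({y | c < |f y|}.indicator f) z + ENNReal.ofReal c := by
  refine iSup_le fun x => iSup_le fun t => iSup_le fun L => iSup_le fun hL => iSup_le fun hz => ?_
  have hle : ∀ y, ENNReal.ofReal |f y| ≤
      ENNReal.ofReal |{y | c < |f y|}.indicator f y| + ENNReal.ofReal c := by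
    intro y
    by_cases hy : c < |f y|
    · simp [hy]
    · simpa [hy] using ofReal_le_ofReal (not_lt.1 hy)
  calc ⨍⁻ y in pPlus n p 0 x t L, ENNReal.ofReal |f y| ∂volume
      ≤ ⨍⁻ y in pPlus n p 0 x t L,
          (ENNReal.ofReal |{y | c < |f y|}.indicator f y| + ENNReal.ofReal c) ∂volume :=
        setLAverage_mono_ae _ (ae_of_all _ hle)
    _ = ⨍⁻ y in pPlus n p 0 x t L, ENNReal.ofReal |{y | c < |f y|}.indicator f y| ∂volume +
          ENNReal.ofReal c :=
        setLAverage_add_const (volume_pPlus_ne_zero x t hL) (volume_pPlus_ne_top x t hL.le) _ _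
    _ ≤ _ := add_le_add_left (setLAverage_le_MplusOpen _ hL hz) _

theorem meas_lt_MplusOpen_le (hp : 1 ≤ p) (f : (Fin n → ℝ) × ℝ → ℝ) {l : ℝ≥0∞}
    (hl : l ≠ 0) :
    l * volume {z | l < MplusOpen n p f z} ≤
      ENNReal.ofReal (2 * (6 ^ n * 6 ^ p)) * ∫⁻ z, ENNReal.ofReal |f z| := by
  set K := ENNReal.ofReal (2 * (6 ^ n * 6 ^ p))
  rcases eq_or_ne (∫⁻ z, ENNReal.ofReal |f z|) ∞ with hI | hI
  · rw [hI, mul_top (ofReal_pos.2 (by positivity)).ne']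
    exact le_top
  set T := {w : (Fin n → ℝ) × ℝ × ℝ |
    0 < w.2.2 ∧ l < ⨍⁻ y in pPlus n p 0 w.1 w.2.1 w.2.2, ENNReal.ofReal |f y| ∂volume}
  obtain ⟨u, huT, hu, hdisj, hcov⟩ := exists_pairwiseDisjoint_pRect_covering hp T
    (fun w hw => hw.1) fun w hw => le_max_one_of_lt_setLAverage hp hI hl hw.2
  have hcover : {z | l < MplusOpen n p f z} ⊆ ⋃ b ∈ u, pRect n p b.1 b.2.1 (6 * b.2.2) := by
    intro z hz
    obtain ⟨x, t, L, hL, hzL, hlt⟩ : ∃ x t L, 0 < L ∧ z ∈ pMinusOpen n p x t L ∧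
        l < ⨍⁻ y in pPlus n p 0 x t L, ENNReal.ofReal |f y| ∂volume := by
      simpa only [mem_ofPred_eq, MplusOpen, lt_iSup_iff, exists_prop] using hz
    obtain ⟨b, hbu, hb⟩ := hcov (x, t, L) ⟨hL, hlt⟩
    exact mem_biUnion hbu (hb (pMinusOpen_subset_pRect x t hL hzL))
  have hdisj' : u.PairwiseDisjoint fun b => pPlus n p 0 b.1 b.2.1 b.2.2 :=
    hdisj.mono_on fun b hb => pPlus_subset_pRect _ _ (huT hb).1
  calc l * volume {z | l < MplusOpen n p f z}
      ≤ l * ∑' b : u, volume (pRect n p b.1.1 b.1.2.1 (6 * b.1.2.2)) :=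
        mul_le_mul_right ((measure_mono hcover).trans (measure_biUnion_le _ hu _)) l
    _ = ∑' b : u, K * (l * volume (pPlus n p 0 b.1.1 b.1.2.1 b.1.2.2)) := by
        rw [← ENNReal.tsum_mul_left]
        congr with b
        rw [volume_pRect_six_mul _ _ (huT b.2).1.le, mul_left_comm]
    _ ≤ ∑' b : u, K * ∫⁻ y in pPlus n p 0 b.1.1 b.1.2.1 b.1.2.2, ENNReal.ofReal |f y| :=
        ENNReal.tsum_le_tsum fun b => mul_le_mul_right
          (mul_measure_le_setLIntegral_of_le_setLAverage (huT b.2).2.le) K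
    _ = K * ∫⁻ y in ⋃ b ∈ u, pPlus n p 0 b.1 b.2.1 b.2.2, ENNReal.ofReal |f y| := by
        rw [ENNReal.tsum_mul_left,
          lintegral_biUnion hu (fun b _ => measurableSet_pPlus _ _ _) hdisj']
    _ ≤ K * ∫⁻ z, ENNReal.ofReal |f z| := mul_le_mul_right (setLIntegral_le_lintegral _ _) K

theorem ofReal_mul_meas_lt_MplusOpen_le (hp : 1 ≤ p) {f : (Fin n → ℝ) × ℝ → ℝ}
    (hf : Measurable f) {t : ℝ} (ht : 0 < t) :
    ENNReal.ofReal t * volume {z | ENNReal.ofReal (2 * t) < MplusOpen n p f z} ≤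
      ENNReal.ofReal (2 * (6 ^ n * 6 ^ p)) * ∫⁻ z in {z | t < |f z|}, ENNReal.ofReal |f z| := by
  have hsub : {z | ENNReal.ofReal (2 * t) < MplusOpen n p f z} ⊆
      {z | ENNReal.ofReal t < MplusOpen n p ({y | t < |f y|}.indicator f) z} := by
    intro z hz
    simp only [mem_ofPred_eq] at hz ⊢
    by_contra! h
    rw [two_mul, ofReal_add ht.le ht.le] at hz
    exact hz.not_ge ((MplusOpen_le_MplusOpen_indicator_add f z).trans (add_le_add_left h _))
  have hind : ∫⁻ z, ENNReal.ofReal |{y | t < |f y|}.indicator f z| =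
      ∫⁻ z in {z | t < |f z|}, ENNReal.ofReal |f z| := by
    rw [← lintegral_indicator (measurableSet_lt measurable_const hf.abs)]
    congr with z
    by_cases hz : t < |f z| <;> simp [hz]
  calc ENNReal.ofReal t * volume {z | ENNReal.ofReal (2 * t) < MplusOpen n p f z}
      ≤ ENNReal.ofReal t *
          volume {z | ENNReal.ofReal t < MplusOpen n p ({y | t < |f y|}.indicator f) z} :=
        mul_le_mul_right (measure_mono hsub) _
    _ ≤ _ := hind ▸ meas_lt_MplusOpen_le hp _ (ofReal_pos.2 ht).ne'

lemma Mplus_congr_ae {f g : (Fin n → ℝ) × ℝ → ℝ}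
    (hfg : f =ᵐ[volume] g) :
    Mplus n p f = Mplus n p g := by
  have havg : ∀ s : Set ((Fin n → ℝ) × ℝ), ⨍ y in s, |f y| = ⨍ y in s, |g y| :=
    fun s => average_congr (ae_restrict_of_ae (hfg.fun_comp abs))
  funext z
  simp only [Mplus, havg]

end MaximalFunction

/-- The parabolic maximal operator `M^+` is bounded on `L^q` for `1 < q < ∞`. -/
theorem stmt_11 (n : ℕ) (p : ℝ) (hp : 1 < p) (q : ℝ) (hq : 1 < q) :
    ∃ c > (0 : ℝ), ∀ f : (Fin n → ℝ) × ℝ → ℝ, MeasureTheory.LocallyIntegrable f volume →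
      (∫⁻ z, Mplus n p f z ^ q) ≤
        ENNReal.ofReal c * ∫⁻ z, ENNReal.ofReal (|f z| ^ q) := by
  have hq0 : 0 < q := by linarith
  have hA : 0 < 2 ^ q * q / (q - 1) := div_pos (by positivity) (by linarith)
  refine ⟨(2 ^ n * 2 ^ p) ^ q * (2 ^ q * q / (q - 1) * (2 * (6 ^ n * 6 ^ p))), by positivity,
    fun f hf => ?_⟩
  obtain ⟨g, hg, hfg⟩ := hf.aestronglyMeasurable
  have hIfg : ∫⁻ z, ENNReal.ofReal (|f z| ^ q) = ∫⁻ z, ENNReal.ofReal (|g z| ^ q) :=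
    lintegral_congr_ae (hfg.fun_comp fun x => ENNReal.ofReal (|x| ^ q))
  rw [Mplus_congr_ae hfg, hIfg]
  calc ∫⁻ z, Mplus n p g z ^ q
      ≤ ∫⁻ z, (ENNReal.ofReal (2 ^ n * 2 ^ p) * MplusOpen n p g z) ^ q :=
        lintegral_mono fun z => rpow_le_rpow (Mplus_le_MplusOpen (by linarith) g z) hq0.le
    _ = ENNReal.ofReal ((2 ^ n * 2 ^ p) ^ q) * ∫⁻ z, MplusOpen n p g z ^ q := by
        simp_rw [mul_rpow_of_nonneg _ _ hq0.le]
        rw [lintegral_const_mul' _ _ (rpow_ne_top_of_nonneg hq0.le ofReal_ne_top),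
          ofReal_rpow_of_nonneg (by positivity) hq0.le]
    _ ≤ ENNReal.ofReal ((2 ^ n * 2 ^ p) ^ q) * (ENNReal.ofReal (2 ^ q * q / (q - 1)) *
          ENNReal.ofReal (2 * (6 ^ n * 6 ^ p)) * ∫⁻ z, ENNReal.ofReal (|g z| ^ q)) :=
        mul_le_mul_right (lintegral_rpow_le_of_meas_lt_le hq
          (lowerSemicontinuous_MplusOpen g).measurable.aemeasurable hg.measurable
          fun t ht => ofReal_mul_meas_lt_MplusOpen_le hp.le hg.measurable ht) _
    _ = _ := by
        rw [← ofReal_mul hA.le, ← mul_assoc, ← ofReal_mul (by positivity)]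
end
end
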